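/- arXiv:2411.01294 — 2 statements merged into one kernel-verified Lean document; each statement's English description precedes it below -/
import Mathlib

section
/- Let A be an m×n dual complex matrix and N_A an NDMPI of A. If X is an n×m dual complex matrix satisfying A·X·A = A·N_A·A, X·A·X = X, and (X·A)* = X·A (i.e., X is a {1,2,4}-inverse of A), then X·A = N_A·A. -/
open Matrix

/-- The dual complex numbers ℂ[ε] with ε² = 0 (dual numbers over ℂ). -/
abbrev DualComplex := DualNumber ℂ

/-- Conjugation on dual complex numbers: star (a + b·ε) = (conj a) + (conj b)·ε. -/
noncomputable instance : StarRing DualComplex where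
  star x := ⟨star x.fst, star x.snd⟩
  star_involutive x := TrivSqZeroExt.ext (star_star x.fst) (star_star x.snd)
  star_mul x y := TrivSqZeroExt.ext
    (show star (x * y).fst = star y.fst * star x.fst by simp [TrivSqZeroExt.fst_mul, mul_comm])
    (show star (x * y).snd = star y.fst * star x.snd + star y.snd * star x.fst by
      simp [TrivSqZeroExt.snd_mul]; ring)
  star_add x y := TrivSqZeroExt.ext (show star (x + y).fst = star x.fst + star y.fst by simp)
    (show star (x + y).snd = star x.snd + star y.snd by simp)

/-- `X` is a new dual Moore–Penrose inverse (NDMPI) of `M`: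
`M*·M·X·M·M* = M*·M·M*`, `X·M·X = X`, `(M·X)* = M·X`, `(X·M)* = X·M`. -/
def IsNDMPI {m n : ℕ} (M : Matrix (Fin m) (Fin n) DualComplex)
    (X : Matrix (Fin n) (Fin m) DualComplex) : Prop :=
  Mᴴ * M * X * M * Mᴴ = Mᴴ * M * Mᴴ ∧
  X * M * X = X ∧
  (M * X)ᴴ = M * X ∧
  (X * M)ᴴ = X * M

/-! `P := X·A` and `Q := N_A·A` are self-adjoint, and since `A·X·A = A·N_A·A` with both `X` and
`N_A` reflexive, `P·Q = P` and `Q·P = Q`; hence `P = P·Q = (Q·P)* = Q* = Q`. -/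
theorem IsSelfAdjoint.eq_of_mul_eq_of_mul_eq {R : Type*} [Mul R] [StarMul R] {p q : R}
    (hp : IsSelfAdjoint p) (hq : IsSelfAdjoint q) (hpq : p * q = p) (hqp : q * p = q) :
    p = q :=
  calc p = p * q := hpq.symm
    _ = star (q * p) := by rw [star_mul, hp.star_eq, hq.star_eq]
    _ = q := by rw [hqp, hq.star_eq]

theorem Matrix.mul_mul_mul_eq_of_mul_mul_eq {m n R : Type*} [Fintype m] [Fintype n]
    [NonUnitalSemiring R] {A : Matrix m n R} {X Y : Matrix n m R}
    (hA : A * X * A = A * Y * A) (hX : X * A * X = X) :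
    X * A * (Y * A) = X * A :=
  calc X * A * (Y * A) = X * (A * Y * A) := by simp only [Matrix.mul_assoc]
    _ = X * (A * X * A) := by rw [hA]
    _ = X * A * X * A := by simp only [Matrix.mul_assoc]
    _ = X * A := by rw [hX]

/-- If `X` is a {1,2,4}-inverse of `A` (i.e. `A·X·A = A_e`, `X·A·X = X`,
`(X·A)* = X·A`), then `X·A = N_A·A`. -/
theorem stmt_13 {m n : ℕ} (A : Matrix (Fin m) (Fin n) DualComplex)
    (NA : Matrix (Fin n) (Fin m) DualComplex) (hNA : IsNDMPI A NA)
    (X : Matrix (Fin n) (Fin m) DualComplex)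
    (h1 : A * X * A = A * NA * A)
    (h2 : X * A * X = X)
    (h4 : (X * A)ᴴ = X * A) :
    X * A = NA * A := by
  obtain ⟨-, hNA2, -, hNA4⟩ := hNA
  exact IsSelfAdjoint.eq_of_mul_eq_of_mul_eq h4 hNA4
    (mul_mul_mul_eq_of_mul_mul_eq h1 h2) (mul_mul_mul_eq_of_mul_mul_eq h1.symm hNA2)
end

section
/- (Existence of the NDMPI) Every m×n dual complex matrix A admits an NDMPI: there exists an n×m dual complex matrix X satisfying A*·A·X·A·A* = A*·A·A*, X·A·X = X, (A·X)* = A·X, and (X·A)* = X·A. -/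
open Matrix

/-!
Write `A = B + εC` with `B`, `C` complex matrices, let `P` be the Moore–Penrose inverse of `B`
(over `ℂ` it is `(B*B)⁺B*`, the pseudo-inverse of the Hermitian matrix `B*B` being given by the
functional calculus), and take `X = P + εG` with `G` the first-order term `pinvDeriv B P C`.
Since `ε² = 0`, the standard parts of the four conditions are Penrose equations for `B` and `P`,
and their `ε`-parts are identities that follow from those equations. The first condition is the
one where `X` is not a true Moore–Penrose inverse: `AXA = A - ε(1 - BP)C(1 - PB)`, but
`B*(1 - BP) = 0`, so `A*` annihilates the error term.
-/

namespace Matrix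

variable {l m n R : Type*}

theorem add_smul_mul_add_smul [Fintype m] [CommRing R] {ε : R} (hε : ε * ε = 0)
    (X₀ X₁ : Matrix l m R) (Y₀ Y₁ : Matrix m n R) :
    (X₀ + ε • X₁) * (Y₀ + ε • Y₁) = X₀ * Y₀ + ε • (X₁ * Y₀ + X₀ * Y₁) := by
  simp only [Matrix.add_mul, Matrix.mul_add, Matrix.smul_mul, Matrix.mul_smul, smul_smul, hε,
    zero_smul, add_zero, smul_add]
  abel

theorem conjTranspose_add_smul [CommRing R] [StarRing R] {ε : R} (hε : star ε = ε)
    (X₀ X₁ : Matrix m n R) : (X₀ + ε • X₁)ᴴ = X₀ᴴ + ε • X₁ᴴ := by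
  rw [conjTranspose_add, conjTranspose_smul, hε]

variable [Fintype m] [Fintype n]

structure IsMoorePenroseInverse [Semiring R] [StarRing R] (B : Matrix m n R)
    (P : Matrix n m R) : Prop where
  mul_inv_mul : B * P * B = B
  inv_mul_inv : P * B * P = P
  isHermitian_mul_inv : (B * P).IsHermitian
  isHermitian_inv_mul : (P * B).IsHermitian

namespace IsMoorePenroseInverse

section Semiring

variable [Semiring R] [StarRing R] {B : Matrix m n R} {P : Matrix n m R}

theorem symm (h : IsMoorePenroseInverse B P) : IsMoorePenroseInverse P B :=
  ⟨h.inv_mul_inv, h.mul_inv_mul, h.isHermitian_inv_mul, h.isHermitian_mul_inv⟩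

theorem conjTranspose_mul_mul_inv (h : IsMoorePenroseInverse B P) : Bᴴ * B * P = Bᴴ := by
  rw [Matrix.mul_assoc, ← h.isHermitian_mul_inv.eq, ← conjTranspose_mul, h.mul_inv_mul]

theorem inv_mul_mul_conjTranspose (h : IsMoorePenroseInverse B P) : P * B * Bᴴ = Bᴴ := by
  rw [← h.isHermitian_inv_mul.eq, ← conjTranspose_mul, ← Matrix.mul_assoc, h.mul_inv_mul]

theorem map {S : Type*} [Semiring S] [StarRing S] (h : IsMoorePenroseInverse B P) (f : R →+* S)
    (hf : Function.Semiconj f star star) : IsMoorePenroseInverse (B.map f) (P.map f) := by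
  refine ⟨?_, ?_, ?_, ?_⟩ <;>
    simp only [IsHermitian, ← Matrix.map_mul, ← conjTranspose_map f hf, h.mul_inv_mul,
      h.inv_mul_inv, h.isHermitian_mul_inv.eq, h.isHermitian_inv_mul.eq]

end Semiring

section Ring

variable [Ring R] [StarRing R] {B : Matrix m n R} {P : Matrix n m R}

theorem one_sub_mul_inv_mul [DecidableEq m] (h : IsMoorePenroseInverse B P) :
    (1 - B * P) * B = 0 := by
  rw [Matrix.sub_mul, Matrix.one_mul, h.mul_inv_mul, sub_self]

theorem mul_one_sub_inv_mul [DecidableEq n] (h : IsMoorePenroseInverse B P) :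
    B * (1 - P * B) = 0 := by
  rw [Matrix.mul_sub, Matrix.mul_one, ← Matrix.mul_assoc, h.mul_inv_mul, sub_self]

theorem conjTranspose_mul_one_sub [DecidableEq m] (h : IsMoorePenroseInverse B P) :
    Bᴴ * (1 - B * P) = 0 := by
  rw [Matrix.mul_sub, Matrix.mul_one, ← Matrix.mul_assoc, h.conjTranspose_mul_mul_inv, sub_self]

theorem isHermitian_one_sub_mul_inv [DecidableEq m] (h : IsMoorePenroseInverse B P) :
    (1 - B * P).IsHermitian :=
  isHermitian_one.sub h.isHermitian_mul_inv

end Ring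

end IsMoorePenroseInverse

section Existence

variable {𝕜 : Type*} [RCLike 𝕜]

theorem mul_cfc_inv_mul_self [DecidableEq n] {H : Matrix n n 𝕜} (hH : IsSelfAdjoint H) :
    H * cfc (·⁻¹ : ℝ → ℝ) H * H = H := by
  have hinv : ContinuousOn (·⁻¹ : ℝ → ℝ) (spectrum ℝ H) :=
    H.finite_real_spectrum.continuousOn _
  have := cfc_mul (fun x : ℝ => x * x⁻¹) (fun x => x) H
  rw [cfc_mul (fun x : ℝ => x) (·⁻¹) H, cfc_id' ℝ H] at this
  simpa [mul_inv_mul_cancel, cfc_id' ℝ H] using this.symm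

theorem cfc_inv_mul_self_mul_cfc_inv [DecidableEq n] {H : Matrix n n 𝕜} (hH : IsSelfAdjoint H) :
    cfc (·⁻¹ : ℝ → ℝ) H * H * cfc (·⁻¹ : ℝ → ℝ) H = cfc (·⁻¹ : ℝ → ℝ) H := by
  have hinv : ContinuousOn (·⁻¹ : ℝ → ℝ) (spectrum ℝ H) :=
    H.finite_real_spectrum.continuousOn _
  have := cfc_mul (fun x : ℝ => x⁻¹ * x) (·⁻¹) H
  rw [cfc_mul (·⁻¹) (fun x : ℝ => x) H, cfc_id' ℝ H] at this
  have hinv_mul_inv : (fun x : ℝ => x⁻¹ * x * x⁻¹) = (·⁻¹) :=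
    funext fun x => by simpa using mul_inv_mul_cancel x⁻¹
  rw [← this, hinv_mul_inv]

open scoped ComplexOrder in
theorem exists_isMoorePenroseInverse (B : Matrix m n 𝕜) : ∃ P, B.IsMoorePenroseInverse P := by
  classical
  set H := Bᴴ * B
  have hH : H.IsHermitian := isHermitian_conjTranspose_mul_self B
  have hH' : IsSelfAdjoint H := hH
  set G := cfc (·⁻¹ : ℝ → ℝ) H
  have hG : Gᴴ = G := cfc_predicate (·⁻¹ : ℝ → ℝ) H
  have hGH : G * H = H * G := by
    simpa [cfc_id' ℝ H] using (cfc_commute_cfc (·⁻¹ : ℝ → ℝ) (fun x => x) H).eq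
  -- `B*B` and `B` have the same kernel; apply this to `1 - GH`
  have hBGH : B * G * H = B := by
    have : H * (1 - G * H) = 0 := by
      rw [Matrix.mul_sub, Matrix.mul_one, ← Matrix.mul_assoc, mul_cfc_inv_mul_self hH', sub_self]
    rw [conjTranspose_mul_self_mul_eq_zero, Matrix.mul_sub, Matrix.mul_one, sub_eq_zero] at this
    rw [Matrix.mul_assoc, ← this]
  refine ⟨G * Bᴴ, ?_, ?_, ?_, ?_⟩
  · rw [← Matrix.mul_assoc, Matrix.mul_assoc _ Bᴴ, hBGH]
  · rw [Matrix.mul_assoc G Bᴴ B, ← Matrix.mul_assoc, cfc_inv_mul_self_mul_cfc_inv hH']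
  · simp only [IsHermitian, conjTranspose_mul, conjTranspose_conjTranspose, hG, Matrix.mul_assoc]
  · rw [IsHermitian, Matrix.mul_assoc, conjTranspose_mul, hG, hH.eq, hGH]

end Existence

section PinvDeriv

variable [Ring R] [StarRing R] [DecidableEq m] [DecidableEq n]

/-- Golub–Pereyra: when the rank of `B + tC` is constant near `t = 0`, this is the derivative at
`t = 0` of its Moore–Penrose inverse, `P` being that of `B`. -/
def pinvDeriv (B : Matrix m n R) (P : Matrix n m R) (C : Matrix m n R) : Matrix n m R :=
  (1 - P * B) * Cᴴ * Pᴴ * P + P * Pᴴ * Cᴴ * (1 - B * P) - P * C * P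

variable {B C : Matrix m n R} {P : Matrix n m R}

theorem IsMoorePenroseInverse.mul_pinvDeriv (h : IsMoorePenroseInverse B P) :
    B * pinvDeriv B P C = Pᴴ * Cᴴ * (1 - B * P) - B * P * C * P := by
  simp only [pinvDeriv, Matrix.mul_add, Matrix.mul_sub, ← Matrix.mul_assoc, h.mul_one_sub_inv_mul,
    h.symm.inv_mul_mul_conjTranspose, Matrix.zero_mul, zero_add]

theorem IsMoorePenroseInverse.pinvDeriv_mul (h : IsMoorePenroseInverse B P) :
    pinvDeriv B P C * B = (1 - P * B) * Cᴴ * Pᴴ - P * C * P * B := by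
  simp only [pinvDeriv, Matrix.add_mul, Matrix.sub_mul, Matrix.mul_assoc, h.one_sub_mul_inv_mul,
    h.symm.conjTranspose_mul_mul_inv, Matrix.mul_zero, add_zero]

theorem IsMoorePenroseInverse.isHermitian_mul_add_mul_pinvDeriv (h : IsMoorePenroseInverse B P) :
    (C * P + B * pinvDeriv B P C).IsHermitian := by
  have hsplit : C * P + B * pinvDeriv B P C = (1 - B * P) * C * P + ((1 - B * P) * C * P)ᴴ := by
    rw [h.mul_pinvDeriv, conjTranspose_mul, conjTranspose_mul, h.isHermitian_one_sub_mul_inv.eq]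
    simp only [Matrix.sub_mul, Matrix.one_mul, Matrix.mul_assoc]
    abel
  rw [hsplit]
  exact isHermitian_add_transpose_self _

theorem IsMoorePenroseInverse.isHermitian_pinvDeriv_mul_add_mul (h : IsMoorePenroseInverse B P) :
    (pinvDeriv B P C * B + P * C).IsHermitian := by
  have hsplit : pinvDeriv B P C * B + P * C = P * C * (1 - P * B) + (P * C * (1 - P * B))ᴴ := by
    rw [h.pinvDeriv_mul, conjTranspose_mul, conjTranspose_mul,
      h.symm.isHermitian_one_sub_mul_inv.eq]
    simp only [Matrix.mul_sub, Matrix.mul_one, Matrix.mul_assoc]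
    abel
  rw [hsplit]
  exact isHermitian_add_transpose_self _

theorem IsMoorePenroseInverse.pinvDeriv_mul_add_mul_mul_add (h : IsMoorePenroseInverse B P) :
    (pinvDeriv B P C * B + P * C) * P + P * B * pinvDeriv B P C = pinvDeriv B P C := by
  rw [Matrix.mul_assoc P B, h.mul_pinvDeriv, h.pinvDeriv_mul]
  calc _ = (1 - P * B) * Cᴴ * Pᴴ * P - P * C * (P * B * P) + P * C * P
        + (P * Pᴴ * Cᴴ * (1 - B * P) - P * B * P * C * P) := by
        simp only [Matrix.add_mul, Matrix.sub_mul, Matrix.mul_sub, Matrix.mul_assoc]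
    _ = pinvDeriv B P C := by
        rw [h.inv_mul_inv, pinvDeriv]
        abel

theorem IsMoorePenroseInverse.mul_add_mul_pinvDeriv_mul_add (h : IsMoorePenroseInverse B P) :
    (C * P + B * pinvDeriv B P C) * B + B * P * C = C - (1 - B * P) * C * (1 - P * B) := by
  rw [h.mul_pinvDeriv]
  calc _ = C * P * B + Pᴴ * Cᴴ * ((1 - B * P) * B) - B * P * C * P * B + B * P * C := by
        simp only [Matrix.add_mul, Matrix.sub_mul, Matrix.mul_assoc]
        abel
    _ = C - (1 - B * P) * C * (1 - P * B) := by
        rw [h.one_sub_mul_inv_mul, Matrix.mul_zero, add_zero]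
        simp only [Matrix.sub_mul, Matrix.mul_sub, Matrix.one_mul, Matrix.mul_one, Matrix.mul_assoc]
        abel

end PinvDeriv

end Matrix

open DualNumber TrivSqZeroExt

theorem DualComplex.star_eps : star (ε : DualComplex) = ε :=
  TrivSqZeroExt.ext (star_zero ℂ) (star_one ℂ)

theorem DualComplex.semiconj_inl_star : Function.Semiconj (inl : ℂ → DualComplex) star star :=
  fun _ => TrivSqZeroExt.ext rfl (star_zero ℂ).symm

theorem DualNumber.map_inl_fst_add_eps_smul_map_inl_snd {m n R : Type*} [CommSemiring R]
    (A : Matrix m n R[ε]) :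
    (A.map fst).map inl + (ε : R[ε]) • (A.map snd).map inl = A := by
  ext i j <;> simp

theorem Matrix.IsMoorePenroseInverse.isNDMPI_add_smul_pinvDeriv {m n : ℕ}
    {B C : Matrix (Fin m) (Fin n) DualComplex} {P : Matrix (Fin n) (Fin m) DualComplex}
    {e : DualComplex} (he : e * e = 0) (he' : star e = e) (h : IsMoorePenroseInverse B P) :
    IsNDMPI (B + e • C) (P + e • pinvDeriv B P C) := by
  refine ⟨?_, ?_, ?_, ?_⟩
  · have hAXA : (B + e • C) * (P + e • pinvDeriv B P C) * (B + e • C) =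
        B + e • C - e • ((1 - B * P) * C * (1 - P * B)) := by
      rw [add_smul_mul_add_smul he, add_smul_mul_add_smul he, h.mul_inv_mul,
        h.mul_add_mul_pinvDeriv_mul_add, smul_sub, add_sub_assoc]
    have hAD : (B + e • C)ᴴ * (e • ((1 - B * P) * C * (1 - P * B))) = 0 := by
      simp only [conjTranspose_add_smul he', Matrix.add_mul, Matrix.smul_mul, Matrix.mul_smul,
        ← Matrix.mul_assoc, h.conjTranspose_mul_one_sub, zero_add, smul_smul, he,
        zero_smul]
    calc _ = (B + e • C)ᴴ * ((B + e • C) * (P + e • pinvDeriv B P C) * (B + e • C)) *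
          (B + e • C)ᴴ := by simp only [Matrix.mul_assoc]
      _ = _ := by rw [hAXA, Matrix.mul_sub, hAD, sub_zero]
  · rw [add_smul_mul_add_smul he, add_smul_mul_add_smul he, h.inv_mul_inv,
      h.pinvDeriv_mul_add_mul_mul_add]
  · rw [add_smul_mul_add_smul he, conjTranspose_add_smul he', h.isHermitian_mul_inv.eq,
      h.isHermitian_mul_add_mul_pinvDeriv.eq]
  · rw [add_smul_mul_add_smul he, conjTranspose_add_smul he', h.isHermitian_inv_mul.eq,
      h.isHermitian_pinvDeriv_mul_add_mul.eq]

/-- Existence of the NDMPI: every dual complex matrix admits an NDMPI. -/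
theorem stmt_19 {m n : ℕ} (A : Matrix (Fin m) (Fin n) DualComplex) :
    ∃ X : Matrix (Fin n) (Fin m) DualComplex, IsNDMPI A X := by
  obtain ⟨P, hP⟩ := Matrix.exists_isMoorePenroseInverse (A.map fst)
  have hB := hP.map (inlHom ℂ ℂ) DualComplex.semiconj_inl_star
  rw [← DualNumber.map_inl_fst_add_eps_smul_map_inl_snd A]
  exact ⟨_, hB.isNDMPI_add_smul_pinvDeriv eps_mul_eps DualComplex.star_eps⟩
end
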